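/- arXiv:2302.10556 — 2 statements merged into one kernel-verified Lean document; each statement's English description precedes it below -/
import Mathlib

section
/- Let G be a finite abelian group with |G| = q ≥ 2, let μ ≥ 1, and let D : Fin(qμ) → Fin(qμ) → G be a difference matrix D(q, μ). Let C ⊆ G^{qμ} be the set of all vectors of the form (fun k => D i k + g) for i ∈ Fin(qμ) and g ∈ G. Then |C| = q²μ, and for any two distinct elements x, y ∈ C: if x − y is a constant vector (all coordinates equal) then the Hamming distance d(x,y) = qμ, and otherwise d(x,y) = (q−1)μ. In particular C is a two-weight (qμ, q²μ, {(q−1)μ, qμ})_q-code. -/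
/-!
Write `D_i^{(g)}` for the row `D i` translated by `g`. Two translates of the same row differ by a
nonzero constant vector, so they disagree in every coordinate. For distinct rows `i ≠ j`,
`D_i^{(g)}` and `D_j^{(h)}` agree exactly at the coordinates `k` with `D i k - D j k = h - g`,
and there are `μ` of these by the difference-matrix property. The same count (`μ < qμ`) shows that
two distinct rows never differ by a constant vector, so the `q²μ` translates are pairwise distinct.
-/

open Finset Function

section DifferenceMatrix

variable {ι κ G : Type*} [Fintype κ] [AddCommGroup G] [DecidableEq G]

def IsDifferenceMatrix (D : ι → κ → G) (μ : ℕ) : Prop :=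
  ∀ i j, i ≠ j → ∀ g : G, Nat.card {k | D i k - D j k = g} = μ

def rowTranslate (D : ι → κ → G) (p : ι × G) : κ → G :=
  fun k => D p.1 k + p.2

theorem hammingDist_eq_card_of_sub_eq_const {x y : κ → G} {c : G} (h : ∀ k, x k - y k = c)
    (hxy : x ≠ y) : hammingDist x y = Fintype.card κ := by
  have hc : c ≠ 0 := by
    rintro rfl
    exact hxy (funext fun k => sub_eq_zero.1 (h k))
  have hne (k : κ) : x k ≠ y k := fun hk => hc (by rw [← h k, hk, sub_self])
  rw [hammingDist, filter_true_of_mem fun k _ => hne k, card_univ]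

theorem hammingDist_add_const (x y : κ → G) (a b : G) :
    hammingDist (fun k => x k + a) (fun k => y k + b) = #{k | x k - y k ≠ b - a} := by
  simp only [hammingDist, ne_eq, sub_eq_sub_iff_add_eq_add, add_comm b]

variable {D : ι → κ → G} {μ : ℕ}

namespace IsDifferenceMatrix

theorem card_filter_sub_eq (hD : IsDifferenceMatrix D μ) {i j : ι} (hij : i ≠ j) (g : G) :
    #{k | D i k - D j k = g} = μ := by
  have h := hD i j hij g
  rwa [Nat.card_eq_fintype_card, Fintype.card_subtype] at h

theorem card_filter_sub_ne (hD : IsDifferenceMatrix D μ) {i j : ι} (hij : i ≠ j) (g : G) :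
    #{k | D i k - D j k ≠ g} = Fintype.card κ - μ := by
  rw [← hD.card_filter_sub_eq hij g, ← card_univ,
    ← card_filter_add_card_filter_not (s := univ) (fun k => D i k - D j k = g),
    Nat.add_sub_cancel_left]

theorem not_forall_sub_eq (hD : IsDifferenceMatrix D μ) (hμ : μ < Fintype.card κ) {i j : ι}
    (hij : i ≠ j) (g : G) : ¬ ∀ k, D i k - D j k = g := by
  intro h
  have := hD.card_filter_sub_eq hij g
  rw [filter_true_of_mem fun k _ => h k, card_univ] at this
  omega

theorem injective_rowTranslate [Nonempty κ] (hD : IsDifferenceMatrix D μ)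
    (hμ : μ < Fintype.card κ) : Injective (rowTranslate D) := by
  rintro ⟨i, g⟩ ⟨j, h⟩ hx
  have hk (k : κ) : D i k - D j k = h - g := by
    rw [sub_eq_sub_iff_add_eq_add, add_comm h]
    exact congrFun hx k
  obtain rfl : i = j := by
    by_contra hij
    exact hD.not_forall_sub_eq hμ hij (h - g) hk
  obtain rfl : g = h := by
    simpa [sub_eq_zero, eq_comm] using hk (Classical.arbitrary κ)
  rfl

theorem hammingDist_rowTranslate (hD : IsDifferenceMatrix D μ) {i j : ι} (hij : i ≠ j)
    (g h : G) :
    hammingDist (rowTranslate D (i, g)) (rowTranslate D (j, h)) = Fintype.card κ - μ :=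
  (hammingDist_add_const _ _ g h).trans (hD.card_filter_sub_ne hij _)

end IsDifferenceMatrix

end DifferenceMatrix

/-- Codes from difference matrices.  Let `G` be a finite abelian group of
order `q ≥ 2`, `D` a difference matrix `D(q, μ)`, and let `C` be the set of
all rows of all translates `D^{(g)}`, `g ∈ G`.  Then `|C| = q²μ` and any two
distinct codewords are at Hamming distance `qμ` if their difference is a
constant vector, and `(q-1)μ` otherwise; in particular `C` is a two-weight
`(qμ, q²μ, {(q-1)μ, qμ})_q`-code. -/
theorem difference_matrix_code
    {G : Type*} [AddCommGroup G] [Fintype G] [DecidableEq G] {q μ : ℕ}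
    (hq : Fintype.card G = q) (hq2 : 2 ≤ q) (hμ : 1 ≤ μ)
    (D : Fin (q * μ) → Fin (q * μ) → G)
    (hD : ∀ i j : Fin (q * μ), i ≠ j → ∀ g : G,
      Nat.card {k : Fin (q * μ) | D i k - D j k = g} = μ)
    (C : Set (Fin (q * μ) → G))
    (hC : C = {x : Fin (q * μ) → G | ∃ i g, x = fun k => D i k + g}) :
    Nat.card C = q ^ 2 * μ ∧
      ∀ x ∈ C, ∀ y ∈ C, x ≠ y →
        ((∃ g : G, ∀ k, x k - y k = g) → hammingDist x y = q * μ) ∧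
        (¬ (∃ g : G, ∀ k, x k - y k = g) → hammingDist x y = (q - 1) * μ) := by
  have hD : IsDifferenceMatrix D μ := hD
  have hμq : μ < Fintype.card (Fin (q * μ)) := by
    rw [Fintype.card_fin]
    nlinarith
  have : Nonempty (Fin (q * μ)) := Fintype.card_pos_iff.mp (by omega)
  have hCr : C = Set.range (rowTranslate D) := by
    ext x
    simp only [hC, Set.mem_ofPred_eq, Set.mem_range, Prod.exists, eq_comm (a := x)]
    rfl
  refine ⟨?_, ?_⟩
  · rw [hCr, Nat.card_range_of_injective (hD.injective_rowTranslate hμq), Nat.card_prod,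
      Nat.card_eq_fintype_card, Fintype.card_fin, Nat.card_eq_fintype_card, hq]
    ring
  · rintro _ hx _ hy hxy
    obtain ⟨⟨i, g₁⟩, rfl⟩ := hCr ▸ hx
    obtain ⟨⟨j, g₂⟩, rfl⟩ := hCr ▸ hy
    refine ⟨fun ⟨c, hc⟩ => ?_, fun hnc => ?_⟩
    · rw [hammingDist_eq_card_of_sub_eq_const hc hxy, Fintype.card_fin]
    · have hij : i ≠ j := by
        rintro rfl
        exact hnc ⟨g₁ - g₂, fun k => add_sub_add_left_eq_sub _ _ _⟩
      rw [hD.hammingDist_rowTranslate hij, Fintype.card_fin, Nat.sub_mul, one_mul]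
end

section
/- Let F be a finite field with q elements and let C be a nontrivial linear two-weight [n,k,{d,n}]_q-code (nonzero codewords have weight set exactly {d,n}, 2 ≤ k ≤ n−2, 3 ≤ d ≤ n−1), with N = q^k and qd − (q−1)(n−1) > 0. Then N·(qd − (q−1)(n−1)) = q²·d holds if and only if the codewords of C form an orthogonal array of strength 2: for every pair of distinct coordinates i ≠ j and every pair (a,b) ∈ F², the number of codewords c ∈ C with c i = a and c j = b equals q^{k−2}. -/
/-!
Let `K(i, j)` be the number of codewords vanishing at two distinct coordinates `i, j`.
Reading off these two coordinates is additive on `C`, so its fibres are empty or have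
`K(i, j)` elements; hence `N ≤ q² K(i, j)`, with equality exactly when all `q²` fibres have
`q^(k-2)` elements. Summing over pairs, `q² ∑ K(i, j) ≥ n(n-1)N`, with equality iff `C` is an
orthogonal array of strength 2.

On the other hand `∑ K(i, j)` counts ordered pairs of distinct zero coordinates of codewords,
so it is `n(n-1) + A(n-d)(n-d-1)` with `A` the number of codewords of weight `d`, while the
full-weight codeword makes every coordinate functional onto, which gives
`q (n + A(n-d)) = nN`. Eliminating `A`,
`q² ∑ K(i, j) - n(n-1)N = n (q²d - N(qd - (q-1)(n-1)))`.
-/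

open Finset

namespace AddMonoidHom

variable {G H : Type*} [AddGroup G] [Fintype G] [AddGroup H] [DecidableEq H] (f : G →+ H)

lemma card_fiber_le_card_fiber_zero (h : H) : #{g | f g = h} ≤ #{g | f g = 0} := by
  by_cases hh : h ∈ Set.range f
  · exact (card_fiber_eq_of_mem_range f hh ⟨0, map_zero f⟩).le
  · simp only [Set.mem_range, not_exists] at hh
    simp [hh]

variable [Fintype H]

lemma card_eq_sum_card_fiber : Fintype.card G = ∑ h : H, #{g | f g = h} :=
  card_eq_sum_card_fiberwise fun _ _ => mem_coe.2 (mem_univ _)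

lemma card_le_card_mul_card_fiber_zero : Fintype.card G ≤ Fintype.card H * #{g | f g = 0} := by
  rw [card_eq_sum_card_fiber f, ← smul_eq_mul, ← card_univ, ← sum_const]
  exact sum_le_sum fun h _ => f.card_fiber_le_card_fiber_zero h

lemma card_eq_card_mul_card_fiber_zero_iff :
    Fintype.card G = Fintype.card H * #{g | f g = 0} ↔
      ∀ h, #{g | f g = h} = #{g | f g = 0} := by
  rw [card_eq_sum_card_fiber f, ← smul_eq_mul, ← card_univ, ← sum_const,
    sum_eq_sum_iff_of_le fun h _ => f.card_fiber_le_card_fiber_zero h]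
  simp

lemma card_eq_card_mul_card_fiber_zero_of_surjective (hf : Function.Surjective f) :
    Fintype.card G = Fintype.card H * #{g | f g = 0} :=
  f.card_eq_card_mul_card_fiber_zero_iff.2 fun h =>
    card_fiber_eq_of_mem_range f (hf h) ⟨0, map_zero f⟩

end AddMonoidHom

lemma SetLike.natCard_setOf_mem_and {S α : Type*} [SetLike S α] (s : S) [Fintype s]
    (p : α → Prop) [DecidablePred p] : Nat.card {x | x ∈ s ∧ p x} = #{x : s | p x} := by
  rw [← Fintype.card_subtype, ← Nat.card_eq_fintype_card]
  exact Nat.card_congr (Equiv.subtypeSubtypeEquivSubtypeInter (· ∈ s) p).symm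

section DoubleCounting

variable {α ι R : Type*} [Fintype α] [Fintype ι] [Zero R] [DecidableEq R]

lemma card_filter_eq_zero_eq_card_sub_hammingNorm (c : ι → R) :
    (#{i | c i = 0} : ℤ) = Fintype.card ι - hammingNorm c := by
  rw [eq_sub_iff_add_eq]
  exact_mod_cast card_filter_add_card_filter_not (s := univ) (fun i => c i = 0)

lemma sum_card_filter_apply_eq_zero (x : α → ι → R) :
    (∑ i, #{a | x a i = 0} : ℤ) = ∑ a, ((Fintype.card ι : ℤ) - hammingNorm (x a)) := by
  simp_rw [← card_filter_eq_zero_eq_card_sub_hammingNorm]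
  exact_mod_cast (sum_card_bipartiteAbove_eq_sum_card_bipartiteBelow
    (s := univ) (t := univ) fun a i => x a i = 0).symm

lemma sum_offDiag_card_filter_apply_eq_zero [DecidableEq ι] (x : α → ι → R) :
    (∑ p ∈ univ.offDiag, #{a | x a p.1 = 0 ∧ x a p.2 = 0} : ℤ) =
      ∑ a, ((Fintype.card ι : ℤ) - hammingNorm (x a)) *
        ((Fintype.card ι : ℤ) - hammingNorm (x a) - 1) := by
  have hoff (a : α) : univ.offDiag.filter (fun p : ι × ι => x a p.1 = 0 ∧ x a p.2 = 0) =
      ({i | x a i = 0} : Finset ι).offDiag := by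
    ext p
    simp only [mem_filter, mem_offDiag, mem_univ, true_and]
    tauto
  have hcount := sum_card_bipartiteAbove_eq_sum_card_bipartiteBelow
    (s := univ) (t := univ.offDiag) fun a (p : ι × ι) => x a p.1 = 0 ∧ x a p.2 = 0
  simp only [bipartiteAbove, bipartiteBelow, hoff, offDiag_card] at hcount
  rw [← Nat.cast_sum, ← hcount]
  push_cast [Nat.cast_sub (Nat.le_mul_self _)]
  refine sum_congr rfl fun a _ => ?_
  rw [card_filter_eq_zero_eq_card_sub_hammingNorm]
  ring

end DoubleCounting

namespace Submodule

variable {F ι : Type*} [Field F] [DecidableEq F] (C : Submodule F (ι → F)) [Fintype C]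

def coordPair (i j : ι) : C →+ F × F :=
  AddMonoidHom.mk' (fun c => ((c : ι → F) i, (c : ι → F) j)) fun _ _ => rfl

lemma sum_hammingNorm_eq_of_weights [Fintype ι] {M : Type*} [AddCommMonoid M] {d : ℕ}
    (g : ℕ → M) (hg : g (Fintype.card ι) = 0)
    (hw : ∀ x ∈ C, x ≠ 0 → hammingNorm x = d ∨ hammingNorm x = Fintype.card ι) :
    ∑ c : C, g (hammingNorm (c : ι → F)) =
      g 0 + #{c : C | c ≠ 0 ∧ hammingNorm (c : ι → F) = d} • g d := by
  have hpt (c : C) : g (hammingNorm (c : ι → F)) =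
      (if c = 0 then g 0 else 0) +
        if c ≠ 0 ∧ hammingNorm (c : ι → F) = d then g d else 0 := by
    by_cases hc : c = 0
    · simp [hc]
    · rcases hw c c.2 (by simpa using hc) with h | h <;> split_ifs <;> simp_all
  simp_rw [hpt, sum_add_distrib, sum_ite_eq', mem_univ, if_true, ← sum_filter, sum_const]

variable [Fintype F]

lemma card_eq_card_mul_card_filter_apply_eq_zero {x : ι → F} (hx : x ∈ C) {i : ι}
    (hxi : x i ≠ 0) : Fintype.card C = Fintype.card F * #{c : C | (c : ι → F) i = 0} := by
  let f : C →+ F := (LinearMap.proj i ∘ₗ C.subtype).toAddMonoidHom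
  refine f.card_eq_card_mul_card_fiber_zero_of_surjective fun y =>
    ⟨⟨(y / x i) • x, C.smul_mem _ hx⟩, ?_⟩
  simp [f, hxi]

lemma card_le_sq_mul_card_filter (i j : ι) :
    Fintype.card C ≤
      Fintype.card F ^ 2 * #{c : C | (c : ι → F) i = 0 ∧ (c : ι → F) j = 0} := by
  simpa [coordPair, Prod.ext_iff, sq] using (C.coordPair i j).card_le_card_mul_card_fiber_zero

lemma forall_card_filter_eq_pow_iff {q k : ℕ} (hq : Fintype.card F = q)
    (hN : Fintype.card C = q ^ k) (hk : 2 ≤ k) (i j : ι) :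
    (∀ a b : F, #{c : C | (c : ι → F) i = a ∧ (c : ι → F) j = b} = q ^ (k - 2)) ↔
      q ^ k = q ^ 2 * #{c : C | (c : ι → F) i = 0 ∧ (c : ι → F) j = 0} := by
  have hpow : q ^ k = q ^ 2 * q ^ (k - 2) := by rw [← pow_add, Nat.add_sub_cancel' hk]
  have hfib := (C.coordPair i j).card_eq_card_mul_card_fiber_zero_iff
  simp only [coordPair, AddMonoidHom.mk'_apply, Prod.ext_iff, Prod.forall, Fintype.card_prod,
    Prod.fst_zero, Prod.snd_zero, hq, hN, ← sq] at hfib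
  constructor
  · intro h
    rw [h 0 0, ← hpow]
  · intro h a b
    have hq0 : 0 < q ^ 2 := by rw [← hq]; positivity
    rw [hfib.1 h a b, Nat.eq_of_mul_eq_mul_left hq0 (h.symm.trans hpow)]

variable [Fintype ι]

lemma forall_offDiag_card_filter_eq_pow_iff [DecidableEq ι] {q k : ℕ}
    (hq : Fintype.card F = q) (hN : Fintype.card C = q ^ k) (hk : 2 ≤ k) :
    (∀ i j : ι, i ≠ j → ∀ a b : F,
        #{c : C | (c : ι → F) i = a ∧ (c : ι → F) j = b} = q ^ (k - 2)) ↔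
      (q : ℤ) ^ 2 * ∑ p ∈ univ.offDiag,
          (#{c : C | (c : ι → F) p.1 = 0 ∧ (c : ι → F) p.2 = 0} : ℤ) =
        Fintype.card ι * (Fintype.card ι - 1) * q ^ k := by
  have hsum := sum_eq_sum_iff_of_le fun (p : ι × ι) (_ : p ∈ univ.offDiag) =>
    hN ▸ hq ▸ C.card_le_sq_mul_card_filter p.1 p.2
  rw [sum_const, ← mul_sum, offDiag_card, card_univ, smul_eq_mul] at hsum
  rw [← Int.natCast_inj.trans eq_comm] at hsum
  push_cast [Nat.cast_sub (Nat.le_mul_self _)] at hsum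
  rw [show ((Fintype.card ι : ℤ) * (Fintype.card ι - 1)) = _ * _ - _ by ring, hsum]
  simp only [mem_offDiag, mem_univ, true_and, Prod.forall,
    forall_card_filter_eq_pow_iff C hq hN hk]

lemma sq_mul_sum_offDiag_card_filter_sub {q d N : ℕ} [DecidableEq ι] (hq : Fintype.card F = q)
    (hN : Fintype.card C = N)
    (hw : ∀ x ∈ C, x ≠ 0 → hammingNorm x = d ∨ hammingNorm x = Fintype.card ι)
    {x : ι → F} (hx : x ∈ C) (hxn : hammingNorm x = Fintype.card ι) :
    (q : ℤ) ^ 2 * ∑ p ∈ univ.offDiag,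
          (#{c : C | (c : ι → F) p.1 = 0 ∧ (c : ι → F) p.2 = 0} : ℤ) -
        Fintype.card ι * (Fintype.card ι - 1) * N =
      Fintype.card ι * (q ^ 2 * d - N * (q * d - (q - 1) * (Fintype.card ι - 1))) := by
  have hxi (i : ι) : x i ≠ 0 := card_filter_eq_iff.1 (hxn.trans card_univ.symm) i (mem_univ i)
  set n : ℤ := (Fintype.card ι : ℤ)
  obtain ⟨A, hA⟩ : ∃ A : ℕ, ∀ g : ℕ → ℤ, g (Fintype.card ι) = 0 →
      ∑ c : C, g (hammingNorm (c : ι → F)) = g 0 + A • g d :=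
    ⟨_, fun g hg => C.sum_hammingNorm_eq_of_weights g hg hw⟩
  have hfirst : (q : ℤ) * (n + A * (n - d)) = n * N := by
    calc (q : ℤ) * (n + A * (n - d)) = q * ∑ c : C, (n - hammingNorm (c : ι → F)) := by
          rw [hA (fun w => n - w) (by simp [n])]
          simp only [Nat.cast_zero, sub_zero, nsmul_eq_mul]
      _ = ∑ i, ((q * #{c : C | (c : ι → F) i = 0} : ℕ) : ℤ) := by
          rw [← sum_card_filter_apply_eq_zero, mul_sum]
          push_cast
          rfl
      _ = n * N := by
          simp_rw [← hq, ← hN, ← C.card_eq_card_mul_card_filter_apply_eq_zero hx (hxi _)]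
          simp [n]
  have hsecond : (∑ p ∈ univ.offDiag,
      #{c : C | (c : ι → F) p.1 = 0 ∧ (c : ι → F) p.2 = 0} : ℤ) =
        n * (n - 1) + A * ((n - d) * (n - d - 1)) := by
    rw [sum_offDiag_card_filter_apply_eq_zero,
      hA (fun w => (n - w) * (n - w - 1)) (by simp [n])]
    simp only [Nat.cast_zero, sub_zero, nsmul_eq_mul]
  -- eliminate `A` between the two moment identities
  linear_combination (q : ℤ) ^ 2 * hsecond + q * (n - d - 1) * hfirst

end Submodule

theorem two_weight_equality_iff_orthogonal_array_general
    {q n k d : ℕ}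
    {F : Type*} [Field F] [Fintype F] [DecidableEq F]
    (hcard : Fintype.card F = q)
    (C : Submodule F (Fin n → F))
    (hk : Module.finrank F C = k) (hk2 : 2 ≤ k)
    (hweights : ∀ x ∈ C, x ≠ 0 → hammingNorm x = d ∨ hammingNorm x = n)
    (hn_att : ∃ x ∈ C, x ≠ 0 ∧ hammingNorm x = n) :
    (q : ℤ) ^ k * ((q : ℤ) * d - ((q : ℤ) - 1) * ((n : ℤ) - 1)) =
        (q : ℤ) ^ 2 * d ↔
      ∀ i j : Fin n, i ≠ j → ∀ a b : F,
        Nat.card {c : Fin n → F | c ∈ C ∧ c i = a ∧ c j = b} = q ^ (k - 2) := by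
  classical
  obtain ⟨x, hxC, hx0, hxn⟩ := hn_att
  have hN : Fintype.card C = q ^ k := by rw [Module.card_eq_pow_finrank (K := F), hcard, hk]
  have hn : (n : ℤ) ≠ 0 := by
    have := hammingNorm_ne_zero_iff.2 hx0
    omega
  have hw : ∀ x : Fin n → F, x ∈ C → x ≠ 0 →
      hammingNorm x = d ∨ hammingNorm x = Fintype.card (Fin n) := by
    simpa using hweights
  have key := C.sq_mul_sum_offDiag_card_filter_sub hcard hN hw hxC (by simpa using hxn)
  simp only [SetLike.natCard_setOf_mem_and, C.forall_offDiag_card_filter_eq_pow_iff hcard hN hk2]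
  push_cast at key
  simp only [Fintype.card_fin] at key ⊢
  constructor
  · intro h
    linear_combination key - n * h
  · intro h
    have hzero : (n : ℤ) * ((q : ℤ) ^ 2 * d - q ^ k * (q * d - (q - 1) * (n - 1))) = 0 := by
      linear_combination h - key
    linear_combination -(mul_eq_zero.1 hzero).resolve_left hn

/-- For a nontrivial linear two-weight `[n, k, {d, n}]_q`-code with
`qd - (q-1)(n-1) > 0`, the bound `N·(qd - (q-1)(n-1)) ≤ q²d` (with `N = q^k`)
is attained with equality if and only if the codewords of `C` form an
orthogonal array of strength 2. -/
theorem two_weight_equality_iff_orthogonal_array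
    {q n k d : ℕ}
    {F : Type*} [Field F] [Fintype F] [DecidableEq F]
    (hcard : Fintype.card F = q)
    (C : Submodule F (Fin n → F))
    (hk : Module.finrank F C = k) (hk2 : 2 ≤ k) (hkn : k ≤ n - 2)
    (hd3 : 3 ≤ d) (hdn : d ≤ n - 1)
    (hweights : ∀ x ∈ C, x ≠ 0 → hammingNorm x = d ∨ hammingNorm x = n)
    (hd_att : ∃ x ∈ C, x ≠ 0 ∧ hammingNorm x = d)
    (hn_att : ∃ x ∈ C, x ≠ 0 ∧ hammingNorm x = n)
    (hpos : 0 < (q : ℤ) * d - ((q : ℤ) - 1) * ((n : ℤ) - 1)) :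
    (q : ℤ) ^ k * ((q : ℤ) * d - ((q : ℤ) - 1) * ((n : ℤ) - 1)) =
        (q : ℤ) ^ 2 * d ↔
      ∀ i j : Fin n, i ≠ j → ∀ a b : F,
        Nat.card {c : Fin n → F | c ∈ C ∧ c i = a ∧ c j = b} = q ^ (k - 2) :=
  two_weight_equality_iff_orthogonal_array_general hcard C hk hk2 hweights hn_att
end
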